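/- Let A, B > 0 with J₁ = J₃ = A, J₂ = B; let ω : ℝ → ℝ³ satisfy the torque-free Euler equations and q : ℝ → ℝ⁴ satisfy the quaternion kinematic equation for ω with unit initial value. Fix a docking vector d = (0, δ, 0) along the body 2-axis and let p(t) := R(q(t)) · d be its position in the LVLH frame. Then for all t ∈ ℝ: ‖p(t)‖ = |δ|, and the inner product of p(t) with the (constant) spatial angular momentum L := R(q(t))·(Aω₁(t), Bω₂(t), Aω₃(t)) equals the constant B·ω₂(0)·δ. Consequently the docking point of the tumbling target moves on a fixed circle (the intersection of a sphere with a plane) whenever L ≠ 0. -/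

import Mathlib

open Matrix

/-- The rotation matrix associated to a quaternion `(q₁, q₂, q₃, q₄)` (scalar part `q₄`). -/
def rotMat (q : Fin 4 → ℝ) : Matrix (Fin 3) (Fin 3) ℝ :=
  !![q 0 ^ 2 - q 1 ^ 2 - q 2 ^ 2 + q 3 ^ 2, 2 * (q 0 * q 1 - q 2 * q 3), 2 * (q 0 * q 2 + q 1 * q 3);
     2 * (q 0 * q 1 + q 2 * q 3), -q 0 ^ 2 + q 1 ^ 2 - q 2 ^ 2 + q 3 ^ 2, 2 * (q 1 * q 2 - q 0 * q 3);
     2 * (q 0 * q 2 - q 1 * q 3), 2 * (q 1 * q 2 + q 0 * q 3), -q 0 ^ 2 - q 1 ^ 2 + q 2 ^ 2 + q 3 ^ 2]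

/-!
`R(q)ᵀ R(q) = |q|⁴ I` for every `q`, and the kinematic equation `q̇ = ½ Ω(ω) q` has a
skew-symmetric `Ω(ω)`, so `|q(t)| = 1` for all `t` and `R(q(t))` is orthogonal. Hence `p(t)`
has the length `|δ|` of `d`, and `⟨p(t), L(t)⟩ = ⟨d, (Aω₁, Bω₂, Aω₃)⟩ = B ω₂(t) δ`, where
`ω₂` is constant because `J₁ = J₃` kills the second Euler equation.
-/

theorem eq_of_hasDerivAt_eq_zero {E : Type*} [NormedAddCommGroup E] [NormedSpace ℝ E]
    {f : ℝ → E} (hf : ∀ t, HasDerivAt f 0 t) (t s : ℝ) : f t = f s :=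
  is_const_of_deriv_eq_zero (fun x => (hf x).differentiableAt) (fun x => (hf x).deriv) t s

theorem rotMat_transpose_mul_self (q : Fin 4 → ℝ) :
    (rotMat q)ᵀ * rotMat q = (q ⬝ᵥ q) ^ 2 • (1 : Matrix (Fin 3) (Fin 3) ℝ) := by
  ext i j
  fin_cases i <;> fin_cases j <;>
    simp [rotMat, mul_apply, dotProduct, Fin.sum_univ_three, Fin.sum_univ_four] <;> ring

theorem rotMat_mulVec_dotProduct_mulVec (q : Fin 4 → ℝ) (x y : Fin 3 → ℝ) :
    rotMat q *ᵥ x ⬝ᵥ rotMat q *ᵥ y = (q ⬝ᵥ q) ^ 2 * (x ⬝ᵥ y) := by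
  rw [dotProduct_mulVec, vecMul_mulVec, rotMat_transpose_mul_self, vecMul_smul, vecMul_one,
    smul_dotProduct, smul_eq_mul]

theorem dotProduct_self_const_of_quaternion_kinematics (ω : ℝ → Fin 3 → ℝ) (q : ℝ → Fin 4 → ℝ)
    (hq1 : ∀ t : ℝ, HasDerivAt (fun s => q s 0)
      (1 / 2 * (ω t 2 * q t 1 - ω t 1 * q t 2 + ω t 0 * q t 3)) t)
    (hq2 : ∀ t : ℝ, HasDerivAt (fun s => q s 1)
      (1 / 2 * (-(ω t 2) * q t 0 + ω t 0 * q t 2 + ω t 1 * q t 3)) t)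
    (hq3 : ∀ t : ℝ, HasDerivAt (fun s => q s 2)
      (1 / 2 * (ω t 1 * q t 0 - ω t 0 * q t 1 + ω t 2 * q t 3)) t)
    (hq4 : ∀ t : ℝ, HasDerivAt (fun s => q s 3)
      (1 / 2 * (-(ω t 0) * q t 0 - ω t 1 * q t 1 - ω t 2 * q t 2)) t)
    (t s : ℝ) : q t ⬝ᵥ q t = q s ⬝ᵥ q s := by
  refine eq_of_hasDerivAt_eq_zero (f := fun s => q s ⬝ᵥ q s) (fun t => ?_) t s
  simp only [dotProduct, Fin.sum_univ_four]
  refine ((((hq1 t).mul (hq1 t)).add ((hq2 t).mul (hq2 t))).add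
    ((hq3 t).mul (hq3 t))).add ((hq4 t).mul (hq4 t)) |>.congr_deriv ?_
  ring

theorem docking_point_on_circle_general (A B : ℝ)
    (ω : ℝ → Fin 3 → ℝ)
    (he2 : ∀ t : ℝ, HasDerivAt (fun s => ω s 1) (ω t 0 * ω t 2 * (A - A) / B) t)
    (q : ℝ → Fin 4 → ℝ)
    (hq1 : ∀ t : ℝ, HasDerivAt (fun s => q s 0)
      (1 / 2 * (ω t 2 * q t 1 - ω t 1 * q t 2 + ω t 0 * q t 3)) t)
    (hq2 : ∀ t : ℝ, HasDerivAt (fun s => q s 1)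
      (1 / 2 * (-(ω t 2) * q t 0 + ω t 0 * q t 2 + ω t 1 * q t 3)) t)
    (hq3 : ∀ t : ℝ, HasDerivAt (fun s => q s 2)
      (1 / 2 * (ω t 1 * q t 0 - ω t 0 * q t 1 + ω t 2 * q t 3)) t)
    (hq4 : ∀ t : ℝ, HasDerivAt (fun s => q s 3)
      (1 / 2 * (-(ω t 0) * q t 0 - ω t 1 * q t 1 - ω t 2 * q t 2)) t)
    (hinit : q 0 0 ^ 2 + q 0 1 ^ 2 + q 0 2 ^ 2 + q 0 3 ^ 2 = 1)
    (δ : ℝ) (p : ℝ → Fin 3 → ℝ) (hp : ∀ t : ℝ, p t = rotMat (q t) *ᵥ ![0, δ, 0])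
    (L : ℝ → Fin 3 → ℝ)
    (hL : ∀ t : ℝ, L t = rotMat (q t) *ᵥ ![A * ω t 0, B * ω t 1, A * ω t 2]) :
    ∀ t : ℝ,
      Real.sqrt ((p t 0) ^ 2 + (p t 1) ^ 2 + (p t 2) ^ 2) = |δ| ∧
      p t 0 * L t 0 + p t 1 * L t 1 + p t 2 * L t 2 = B * ω 0 1 * δ := by
  intro t
  have hunit : q t ⬝ᵥ q t = 1 := by
    rw [dotProduct_self_const_of_quaternion_kinematics ω q hq1 hq2 hq3 hq4 t 0]
    simpa only [dotProduct, Fin.sum_univ_four, sq] using hinit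
  have hω₂ : ω t 1 = ω 0 1 := eq_of_hasDerivAt_eq_zero (fun s => by simpa using he2 s) t 0
  have hpp : p t ⬝ᵥ p t = δ ^ 2 := by
    rw [hp, rotMat_mulVec_dotProduct_mulVec, hunit]
    simp [dotProduct, Fin.sum_univ_three, sq]
  have hpL : p t ⬝ᵥ L t = B * ω t 1 * δ := by
    rw [hp, hL, rotMat_mulVec_dotProduct_mulVec, hunit]
    simp only [one_pow, one_mul, dotProduct, Fin.sum_univ_three, cons_val_zero, cons_val_one,
      cons_val, zero_mul, zero_add, add_zero]
    ring
  simp only [dotProduct, Fin.sum_univ_three, ← sq] at hpp hpL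
  exact ⟨by rw [hpp, Real.sqrt_sq_eq_abs], by rw [hpL, hω₂]⟩

/-- For a tumbling rotationally symmetric target (`J₁ = J₃ = A`, `J₂ = B`), a docking
point `d = (0, δ, 0)` on the body 2-axis keeps constant distance `|δ|` from the center
of mass and constant inner product `B ω₂(0) δ` with the spatial angular momentum:
it moves on a fixed circle (sphere ∩ plane) whenever the angular momentum is nonzero. -/
theorem docking_point_on_circle (A B : ℝ) (hA : 0 < A) (hB : 0 < B)
    (ω : ℝ → Fin 3 → ℝ)
    (he1 : ∀ t : ℝ, HasDerivAt (fun s => ω s 0) (ω t 1 * ω t 2 * (B - A) / A) t)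
    (he2 : ∀ t : ℝ, HasDerivAt (fun s => ω s 1) (ω t 0 * ω t 2 * (A - A) / B) t)
    (he3 : ∀ t : ℝ, HasDerivAt (fun s => ω s 2) (ω t 0 * ω t 1 * (A - B) / A) t)
    (q : ℝ → Fin 4 → ℝ)
    (hq1 : ∀ t : ℝ, HasDerivAt (fun s => q s 0)
      (1 / 2 * (ω t 2 * q t 1 - ω t 1 * q t 2 + ω t 0 * q t 3)) t)
    (hq2 : ∀ t : ℝ, HasDerivAt (fun s => q s 1)
      (1 / 2 * (-(ω t 2) * q t 0 + ω t 0 * q t 2 + ω t 1 * q t 3)) t)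
    (hq3 : ∀ t : ℝ, HasDerivAt (fun s => q s 2)
      (1 / 2 * (ω t 1 * q t 0 - ω t 0 * q t 1 + ω t 2 * q t 3)) t)
    (hq4 : ∀ t : ℝ, HasDerivAt (fun s => q s 3)
      (1 / 2 * (-(ω t 0) * q t 0 - ω t 1 * q t 1 - ω t 2 * q t 2)) t)
    (hinit : q 0 0 ^ 2 + q 0 1 ^ 2 + q 0 2 ^ 2 + q 0 3 ^ 2 = 1)
    (δ : ℝ) (p : ℝ → Fin 3 → ℝ) (hp : ∀ t : ℝ, p t = rotMat (q t) *ᵥ ![0, δ, 0])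
    (L : ℝ → Fin 3 → ℝ)
    (hL : ∀ t : ℝ, L t = rotMat (q t) *ᵥ ![A * ω t 0, B * ω t 1, A * ω t 2]) :
    ∀ t : ℝ,
      Real.sqrt ((p t 0) ^ 2 + (p t 1) ^ 2 + (p t 2) ^ 2) = |δ| ∧
      p t 0 * L t 0 + p t 1 * L t 1 + p t 2 * L t 2 = B * ω 0 1 * δ :=
  docking_point_on_circle_general A B ω he2 q hq1 hq2 hq3 hq4 hinit δ p hp L hL
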